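/- KM update postulate U2 holds for PEKB belief update under satisfiability of P: for all PEKBs P and Q, if P is consistent and P ⊨ Q, then P ⋄ Q ≡ P. -/

import Mathlib

/-- Modal formulae over atomic propositions `Atom` and agents `Agt`. -/
inductive Form (Atom Agt : Type) : Type
  | top : Form Atom Agt
  | bot : Form Atom Agt
  | atom : Atom → Form Atom Agt
  | neg : Form Atom Agt → Form Atom Agt
  | and : Form Atom Agt → Form Atom Agt → Form Atom Agt
  | box : Agt → Form Atom Agt → Form Atom Agt

/-- `◇_i φ` abbreviates `¬ B_i ¬ φ`. -/
def Form.dia {Atom Agt : Type} (i : Agt) (φ : Form Atom Agt) : Form Atom Agt :=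
  Form.neg (Form.box i (Form.neg φ))

/-- A Kripke structure: worlds, a valuation, and an accessibility relation per agent. -/
structure Kripke (Atom Agt : Type) where
  W : Type
  val : W → Atom → Prop
  R : Agt → W → W → Prop

/-- Every accessibility relation is serial: every world has a successor. -/
def Kripke.Serial {Atom Agt : Type} (M : Kripke Atom Agt) : Prop :=
  ∀ (i : Agt) (w : M.W), ∃ v : M.W, M.R i w v

/-- Satisfaction of a formula at a world of a Kripke structure. -/
def Sat {Atom Agt : Type} (M : Kripke Atom Agt) : M.W → Form Atom Agt → Prop
  | _, Form.top => True
  | _, Form.bot => False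
  | w, Form.atom p => M.val w p
  | w, Form.neg φ => ¬ Sat M w φ
  | w, Form.and φ ψ => Sat M w φ ∧ Sat M w ψ
  | w, Form.box i φ => ∀ v : M.W, M.R i w v → Sat M v φ

/-- KD_n entailment from a set of formulae: truth at every world of every serial
Kripke structure satisfying all members of `S`. -/
def SetEntails {Atom Agt : Type} (S : Set (Form Atom Agt)) (φ : Form Atom Agt) : Prop :=
  ∀ (M : Kripke Atom Agt), M.Serial → ∀ w : M.W, (∀ ψ ∈ S, Sat M w ψ) → Sat M w φ

/-- KD_n entailment between single formulae. -/
def Entails {Atom Agt : Type} (φ ψ : Form Atom Agt) : Prop :=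
  SetEntails {φ} ψ

/-- A set of formulae is consistent iff all its members hold simultaneously at
some world of some serial Kripke structure. -/
def Consistent {Atom Agt : Type} (S : Set (Form Atom Agt)) : Prop :=
  ∃ (M : Kripke Atom Agt), M.Serial ∧ ∃ w : M.W, ∀ ψ ∈ S, Sat M w ψ

/-- Restricted modal literals: a (possibly empty) sequence of `B_i`/`◇_i`
operators applied to a propositional literal. -/
inductive IsRML {Atom Agt : Type} : Form Atom Agt → Prop
  | pos (p : Atom) : IsRML (Form.atom p)
  | neg (p : Atom) : IsRML (Form.neg (Form.atom p))
  | box (i : Agt) {φ : Form Atom Agt} : IsRML φ → IsRML (Form.box i φ)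
  | dia (i : Agt) {φ : Form Atom Agt} : IsRML φ → IsRML (Form.dia i φ)

/-- A proper epistemic knowledge base: a finite set of RMLs. -/
def IsPEKB {Atom Agt : Type} (S : Set (Form Atom Agt)) : Prop :=
  S.Finite ∧ ∀ φ ∈ S, IsRML φ

/-- Entailment of every member of a set (PEKB) from a set. -/
def KBEntails {Atom Agt : Type} (S T : Set (Form Atom Agt)) : Prop :=
  ∀ φ ∈ T, SetEntails S φ

/-- Logical equivalence of two sets of formulae. -/
def KBEquiv {Atom Agt : Type} (S T : Set (Form Atom Agt)) : Prop :=
  KBEntails S T ∧ KBEntails T S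

/-- Upward closure: the RMLs entailed by some member of `S`. -/
def upSet {Atom Agt : Type} (S : Set (Form Atom Agt)) : Set (Form Atom Agt) :=
  {ψ | IsRML ψ ∧ ∃ φ ∈ S, Entails φ ψ}

/-- Downward closure: the RMLs entailing some member of `S`. -/
def downSet {Atom Agt : Type} (S : Set (Form Atom Agt)) : Set (Form Atom Agt) :=
  {ψ | IsRML ψ ∧ ∃ φ ∈ S, Entails ψ φ}

/-- Maximal elements of a set of RMLs under entailment. -/
def maxSet {Atom Agt : Type} (S : Set (Form Atom Agt)) : Set (Form Atom Agt) :=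
  {φ ∈ S | ∀ ψ ∈ S, Entails ψ φ → Entails φ ψ}

/-- NNF-negation of an RML: push the negation through the modalities. -/
def nnfNeg {Atom Agt : Type} : Form Atom Agt → Form Atom Agt
  | Form.atom p => Form.neg (Form.atom p)
  | Form.neg (Form.atom p) => Form.atom p
  | Form.neg (Form.box i (Form.neg φ)) => Form.box i (nnfNeg φ)
  | Form.box i φ => Form.dia i (nnfNeg φ)
  | φ => φ

/-- NNF-negation of every member of a PEKB. -/
def negKB {Atom Agt : Type} (S : Set (Form Atom Agt)) : Set (Form Atom Agt) :=
  nnfNeg '' S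

/-- Belief erasure: `P ⊖ Q = max(↑P ∖ ↓Q)`. -/
def eraseKB {Atom Agt : Type} (P Q : Set (Form Atom Agt)) : Set (Form Atom Agt) :=
  maxSet (upSet P \ downSet Q)

/-- Belief update: `P ⋄ Q = max((P ⊖ ¬Q) ∪ Q)`. -/
def updateKB {Atom Agt : Type} (P Q : Set (Form Atom Agt)) : Set (Form Atom Agt) :=
  maxSet (eraseKB P (negKB Q) ∪ Q)

/-- Meet: `P ⊓ Q = max(↑P ∩ ↑Q)`. -/
def meetKB {Atom Agt : Type} (P Q : Set (Form Atom Agt)) : Set (Form Atom Agt) :=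
  maxSet (upSet P ∩ upSet Q)


section Aux

open Classical

variable {Atom Agt : Type}

/-- Reflexivity of entailment. -/
lemma entails_refl (φ : Form Atom Agt) : Entails φ φ := by
  intro M _ w hw; exact hw φ rfl

/-- Transitivity of entailment. -/
lemma entails_trans {φ ψ χ : Form Atom Agt} (h1 : Entails φ ψ) (h2 : Entails ψ χ) :
    Entails φ χ := by
  intro M hM w hw
  exact h2 M hM w (by intro x hx; rcases hx with rfl; exact h1 M hM w hw)

/-- Semantics of NNF negation on RMLs. -/
lemma sat_nnfNeg {φ : Form Atom Agt} (hφ : IsRML φ) (M : Kripke Atom Agt) (w : M.W) :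
    Sat M w (nnfNeg φ) ↔ ¬ Sat M w φ := by
  induction hφ generalizing w with
  | pos p => simp [nnfNeg, Sat]
  | neg p => simp [nnfNeg, Sat]
  | @box i φ h ih =>
      show Sat M w (Form.dia i (nnfNeg φ)) ↔ ¬ Sat M w (Form.box i φ)
      simp only [Form.dia, Sat]
      apply not_congr
      refine forall_congr' fun v => imp_congr Iff.rfl ?_
      rw [ih v, not_not]
  | @dia i φ h ih =>
      show Sat M w (Form.box i (nnfNeg φ)) ↔ ¬ Sat M w (Form.neg (Form.box i (Form.neg φ)))
      simp only [Sat, not_not]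
      exact forall_congr' fun v => imp_congr Iff.rfl (ih v)


/-- Canonical form of an RML: a list of modalities (agent, isBox) and a literal (atom, isPositive). -/
def mkRML : List (Agt × Bool) → (Atom × Bool) → Form Atom Agt
  | [], (p, true) => Form.atom p
  | [], (p, false) => Form.neg (Form.atom p)
  | (i, true) :: ms, l => Form.box i (mkRML ms l)
  | (i, false) :: ms, l => Form.dia i (mkRML ms l)

lemma isRML_rep {φ : Form Atom Agt} (h : IsRML φ) :
    ∃ (ms : List (Agt × Bool)) (l : Atom × Bool), φ = mkRML ms l := by
  induction h with
  | pos p => exact ⟨[], (p, true), rfl⟩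
  | neg p => exact ⟨[], (p, false), rfl⟩
  | box i _ ih => obtain ⟨ms, l, rfl⟩ := ih; exact ⟨(i, true) :: ms, l, rfl⟩
  | dia i _ ih => obtain ⟨ms, l, rfl⟩ := ih; exact ⟨(i, false) :: ms, l, rfl⟩

/-- Satisfaction of a literal by a valuation. -/
def litSat (V : Atom → Prop) : Atom × Bool → Prop
  | (p, true) => V p
  | (p, false) => ¬ V p

lemma mkRML_cons_true (i : Agt) (ms : List (Agt × Bool)) (l : Atom × Bool) :
    mkRML ((i, true) :: ms) l = Form.box i (mkRML ms l) := by
  obtain ⟨p, _ | _⟩ := l <;> rfl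

lemma mkRML_cons_false (i : Agt) (ms : List (Agt × Bool)) (l : Atom × Bool) :
    mkRML ((i, false) :: ms) l = Form.dia i (mkRML ms l) := by
  obtain ⟨p, _ | _⟩ := l <;> rfl

lemma sat_mkRML_nil (M : Kripke Atom Agt) (w : M.W) (l : Atom × Bool) :
    Sat M w (mkRML [] l) ↔ litSat (M.val w) l := by
  obtain ⟨p, _ | _⟩ := l <;> simp [mkRML, litSat, Sat]

/-- At a world whose only successor (for every agent) is itself, an RML holds
iff its literal holds. -/
lemma sat_selfloop (M : Kripke Atom Agt) (w : M.W)
    (hw : ∀ a v, M.R a w v ↔ v = w) :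
    ∀ (ms : List (Agt × Bool)) (l : Atom × Bool),
      Sat M w (mkRML ms l) ↔ litSat (M.val w) l := by
  intro ms
  induction ms with
  | nil => exact fun l => sat_mkRML_nil M w l
  | cons m ms ih =>
      intro l
      obtain ⟨i, _ | _⟩ := m
      · -- dia
        show Sat M w (Form.dia i (mkRML ms l)) ↔ _
        simp only [Form.dia, Sat]
        constructor
        · intro hx
          by_contra hc
          exact hx (fun v hv => by rw [(hw i v).mp hv, ih l]; exact hc)
        · intro hx hall
          exact (hall w ((hw i w).mpr rfl)) ((ih l).mpr hx)
      · -- box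
        show Sat M w (Form.box i (mkRML ms l)) ↔ _
        simp only [Sat]
        constructor
        · intro hx; exact (ih l).mp (hx w ((hw i w).mpr rfl))
        · intro hx v hv; rw [(hw i v).mp hv, ih l]; exact hx

/-- The one-point reflexive model. -/
def onePoint (Atom Agt : Type) (V : Atom → Prop) : Kripke Atom Agt :=
  ⟨Unit, fun _ p => V p, fun _ _ _ => True⟩

lemma onePoint_serial (V : Atom → Prop) : (onePoint Atom Agt V).Serial :=
  fun _ w => ⟨w, trivial⟩

lemma onePoint_sat (V : Atom → Prop) (ms : List (Agt × Bool)) (l : Atom × Bool) :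
    Sat (onePoint Atom Agt V) () (mkRML ms l) ↔ litSat V l :=
  sat_selfloop _ _ (fun _ v => ⟨fun _ => rfl, fun _ => trivial⟩) ms l

/-- The two-point model: two disconnected reflexive points. -/
def twoPoint (Atom Agt : Type) (V₁ V₂ : Atom → Prop) : Kripke Atom Agt :=
  ⟨Bool, fun b p => if b then V₁ p else V₂ p, fun _ x y => x = y⟩

lemma twoPoint_serial (V₁ V₂ : Atom → Prop) : (twoPoint Atom Agt V₁ V₂).Serial :=
  fun _ w => ⟨w, rfl⟩

lemma twoPoint_sat (V₁ V₂ : Atom → Prop) (b : Bool) (ms : List (Agt × Bool)) (l : Atom × Bool) :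
    Sat (twoPoint Atom Agt V₁ V₂) b (mkRML ms l) ↔ litSat (if b then V₁ else V₂) l := by
  have := sat_selfloop (twoPoint Atom Agt V₁ V₂) b
    (fun _ v => ⟨fun h => h.symm, fun h => h.symm⟩) ms l
  rw [this]
  cases b <;> rfl

/-- Adding a fresh root on top of a model. -/
def addRoot (M : Kripke Atom Agt) (V : Atom → Prop) (succ : Agt → M.W → Prop) :
    Kripke Atom Agt :=
  ⟨Option M.W,
   fun w p => match w with
     | none => V p
     | some x => M.val x p,
   fun a w v => match w, v with
     | none, some y => succ a y
     | none, none => False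
     | some x, some y => M.R a x y
     | some _, none => False⟩

lemma addRoot_serial (M : Kripke Atom Agt) (V : Atom → Prop) (succ : Agt → M.W → Prop)
    (hM : M.Serial) (hs : ∀ a, ∃ v, succ a v) : (addRoot M V succ).Serial := by
  intro a w
  match w with
  | none => obtain ⟨v, hv⟩ := hs a; exact ⟨some v, hv⟩
  | some x => obtain ⟨v, hv⟩ := hM a x; exact ⟨some v, hv⟩

/-- The embedded model satisfies the same formulae. -/
lemma addRoot_sat (M : Kripke Atom Agt) (V : Atom → Prop) (succ : Agt → M.W → Prop)
    (φ : Form Atom Agt) : ∀ (x : M.W), Sat (addRoot M V succ) (some x) φ ↔ Sat M x φ := by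
  induction φ with
  | top => intro x; simp [Sat]
  | bot => intro x; simp [Sat]
  | atom p => intro x; exact Iff.rfl
  | neg φ ih => intro x; exact not_congr (ih x)
  | and φ ψ ihφ ihψ => intro x; exact and_congr (ihφ x) (ihψ x)
  | box i φ ih =>
      intro x
      constructor
      · intro hx v hv; exact (ih v).mp (hx (some v) hv)
      · intro hx v hv
        match v, hv with
        | some y, hv => exact (ih y).mpr (hx y hv)


/-- `Weaker ms₁ ms₂`: `ms₂` arises from `ms₁` by replacing some boxes by diamonds. -/
def Weaker : List (Agt × Bool) → List (Agt × Bool) → Prop :=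
  List.Forall₂ (fun a b => a.1 = b.1 ∧ (b.2 = true → a.2 = true))

/-- Countermodel: if the weakening relation fails, there is a serial countermodel. -/
lemma countermodel : ∀ (ms₁ : List (Agt × Bool)) (l₁ : Atom × Bool)
    (ms₂ : List (Agt × Bool)) (l₂ : Atom × Bool),
    ¬ (l₁ = l₂ ∧ Weaker ms₁ ms₂) →
    ∃ (M : Kripke Atom Agt), M.Serial ∧ ∃ w : M.W,
      Sat M w (mkRML ms₁ l₁) ∧ ¬ Sat M w (mkRML ms₂ l₂) := by
  intro ms₁
  induction ms₁ with
  | nil =>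
      intro l₁ ms₂ l₂ hne
      match ms₂ with
      | [] =>
          have hl : l₁ ≠ l₂ := fun he => hne ⟨he, List.Forall₂.nil⟩
          obtain ⟨p, s⟩ := l₁; obtain ⟨q, t⟩ := l₂
          refine ⟨onePoint Atom Agt (fun r => (r = p ∧ s = true) ∨ (r = q ∧ t = false)),
            onePoint_serial _, (), ?_, ?_⟩
          · rw [onePoint_sat]
            cases s with
            | true => exact Or.inl ⟨rfl, rfl⟩
            | false =>
                rintro (⟨_, hs⟩ | ⟨rfl, ht⟩)
                · cases hs
                · exact hl (by rw [ht])
          · rw [onePoint_sat]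
            cases t with
            | true =>
                rintro (⟨rfl, hs⟩ | ⟨_, ht⟩)
                · exact hl (by rw [hs])
                · cases ht
            | false => exact fun hx => hx (Or.inr ⟨rfl, rfl⟩)
      | (j, b') :: ms₂' =>
          refine ⟨addRoot (onePoint Atom Agt (fun r => r = l₂.1 ∧ l₂.2 = false))
              (fun r => r = l₁.1 ∧ l₁.2 = true) (fun _ _ => True),
            addRoot_serial _ _ _ (onePoint_serial _) (fun _ => ⟨(), trivial⟩), none, ?_, ?_⟩
          · refine (sat_mkRML_nil _ _ _).mpr ?_
            show litSat (fun r => r = l₁.1 ∧ l₁.2 = true) l₁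
            obtain ⟨p, _ | _⟩ := l₁ <;> simp [litSat]
          · have hu : ¬ Sat (addRoot (onePoint Atom Agt (fun r => r = l₂.1 ∧ l₂.2 = false))
                (fun r => r = l₁.1 ∧ l₁.2 = true) (fun _ _ => True)) (some ()) (mkRML ms₂' l₂) := by
              refine (not_congr ((addRoot_sat _ _ _ _ _).trans (onePoint_sat _ _ _))).mpr ?_
              obtain ⟨q, _ | _⟩ := l₂ <;> simp [litSat]
            cases b' with
            | true =>
                rw [mkRML_cons_true]
                intro hx
                exact hu (hx (some ()) trivial)
            | false =>
                rw [mkRML_cons_false]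
                simp only [Form.dia, Sat, not_not]
                intro v hv
                match v, hv with
                | some (), _ => exact hu
  | cons m ms₁' ih =>
      intro l₁ ms₂ l₂ hne
      obtain ⟨i, b⟩ := m
      match ms₂ with
      | [] =>
          refine ⟨addRoot (onePoint Atom Agt (fun r => r = l₁.1 ∧ l₁.2 = true))
              (fun r => r = l₂.1 ∧ l₂.2 = false) (fun _ _ => True),
            addRoot_serial _ _ _ (onePoint_serial _) (fun _ => ⟨(), trivial⟩), none, ?_, ?_⟩
          · have hu : Sat (addRoot (onePoint Atom Agt (fun r => r = l₁.1 ∧ l₁.2 = true))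
                (fun r => r = l₂.1 ∧ l₂.2 = false) (fun _ _ => True)) (some ()) (mkRML ms₁' l₁) := by
              refine ((addRoot_sat _ _ _ _ _).trans (onePoint_sat _ _ _)).mpr ?_
              obtain ⟨p, _ | _⟩ := l₁ <;> simp [litSat]
            cases b with
            | true =>
                rw [mkRML_cons_true]
                intro v hv
                match v, hv with
                | some (), _ => exact hu
            | false =>
                rw [mkRML_cons_false]
                simp only [Form.dia, Sat, not_not]
                intro hx
                exact hx (some ()) trivial hu
          · refine (not_congr (sat_mkRML_nil _ _ _)).mpr ?_
            show ¬ litSat (fun r => r = l₂.1 ∧ l₂.2 = false) l₂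
            obtain ⟨q, _ | _⟩ := l₂ <;> simp [litSat]
      | (j, b') :: ms₂' =>
          by_cases hrec : l₁ = l₂ ∧ Weaker ms₁' ms₂'
          · have hhead : ¬ (i = j ∧ (b' = true → b = true)) := by
              intro hx
              exact hne ⟨hrec.1, List.Forall₂.cons ⟨hx.1, hx.2⟩ hrec.2⟩
            set V₁ : Atom → Prop := fun r => r = l₁.1 ∧ l₁.2 = true with hV₁
            set V₂ : Atom → Prop := fun r => r = l₂.1 ∧ l₂.2 = false with hV₂
            have hu₁ : Sat (twoPoint Atom Agt V₁ V₂) true (mkRML ms₁' l₁) := by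
              rw [twoPoint_sat]
              obtain ⟨p, _ | _⟩ := l₁ <;> simp [litSat, hV₁]
            have hu₂ : ¬ Sat (twoPoint Atom Agt V₁ V₂) false (mkRML ms₂' l₂) := by
              rw [twoPoint_sat]
              obtain ⟨q, _ | _⟩ := l₂ <;> simp [litSat, hV₂]
            by_cases hij : i = j
            · have hb' : b' = true := by
                by_contra hb'
                exact hhead ⟨hij, fun he => absurd he hb'⟩
              have hb : b = false := by
                by_contra hb
                exact hhead ⟨hij, fun _ => by simpa using hb⟩
              subst hij hb' hb
              refine ⟨addRoot (twoPoint Atom Agt V₁ V₂) (fun _ => False) (fun _ _ => True),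
                addRoot_serial _ _ _ (twoPoint_serial _ _) (fun _ => ⟨true, trivial⟩), none, ?_, ?_⟩
              · rw [mkRML_cons_false]
                simp only [Form.dia, Sat, not_not]
                intro hx
                exact hx (some true) trivial ((addRoot_sat _ _ _ _ _).mpr hu₁)
              · rw [mkRML_cons_true]
                intro hx
                exact hu₂ ((addRoot_sat _ _ _ _ _).mp (hx (some false) trivial))
            · refine ⟨addRoot (twoPoint Atom Agt V₁ V₂) (fun _ => False)
                  (fun a v => (a = j ∧ v = false) ∨ (a ≠ j ∧ v = true)),
                addRoot_serial _ _ _ (twoPoint_serial _ _) (fun a => by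
                  by_cases ha : a = j
                  · exact ⟨false, Or.inl ⟨ha, rfl⟩⟩
                  · exact ⟨true, Or.inr ⟨ha, rfl⟩⟩), none, ?_, ?_⟩
              · have hsucc : ∀ v : Bool, ((i = j ∧ v = false) ∨ (i ≠ j ∧ v = true)) → v = true := by
                  rintro v (⟨hij', _⟩ | ⟨_, hv⟩)
                  · exact absurd hij' hij
                  · exact hv
                cases b with
                | true =>
                    rw [mkRML_cons_true]
                    intro v hv
                    match v, hv with
                    | some u, hv =>
                        have hu : u = true := hsucc u hv
                        subst hu
                        exact (addRoot_sat _ _ _ _ _).mpr hu₁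
                | false =>
                    rw [mkRML_cons_false]
                    simp only [Form.dia, Sat, not_not]
                    intro hx
                    exact hx (some true) (Or.inr ⟨hij, rfl⟩) ((addRoot_sat _ _ _ _ _).mpr hu₁)
              · have hjf : ¬ Sat (addRoot (twoPoint Atom Agt V₁ V₂) (fun _ => False)
                      (fun a v => (a = j ∧ v = false) ∨ (a ≠ j ∧ v = true))) (some false)
                      (mkRML ms₂' l₂) := by
                  refine (not_congr (addRoot_sat _ _ _ _ _)).mpr ?_
                  exact hu₂
                cases b' with
                | true =>
                    rw [mkRML_cons_true]
                    intro hx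
                    exact hjf (hx (some false) (Or.inl ⟨rfl, rfl⟩))
                | false =>
                    rw [mkRML_cons_false]
                    simp only [Form.dia, Sat, not_not]
                    rintro v hv
                    match v, hv with
                    | some u, hv =>
                        rcases hv with ⟨_, rfl⟩ | ⟨hj, _⟩
                        · exact hjf
                        · exact absurd rfl hj
          · obtain ⟨M', hM', w', hs₁, hs₂⟩ := ih l₁ ms₂' l₂ hrec
            refine ⟨addRoot M' (fun _ => False) (fun _ v => v = w'),
              addRoot_serial _ _ _ hM' (fun _ => ⟨w', rfl⟩), none, ?_, ?_⟩
            · cases b with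
              | true =>
                  rw [mkRML_cons_true]
                  intro v hv
                  match v, hv with
                  | some u, hv =>
                      have hu : u = w' := hv
                      subst hu
                      exact (addRoot_sat _ _ _ _ _).mpr hs₁
              | false =>
                  rw [mkRML_cons_false]
                  simp only [Form.dia, Sat, not_not]
                  intro hx
                  exact hx (some w') rfl ((addRoot_sat _ _ _ _ _).mpr hs₁)
            · cases b' with
              | true =>
                  rw [mkRML_cons_true]
                  intro hx
                  exact hs₂ ((addRoot_sat _ _ _ _ _).mp (hx (some w') rfl))
              | false =>
                  rw [mkRML_cons_false]
                  simp only [Form.dia, Sat, not_not]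
                  intro v hv
                  match v, hv with
                  | some u, hv =>
                      have hu : u = w' := hv
                      subst hu
                      rw [addRoot_sat]
                      exact hs₂

/-- Characterization (soundness direction): entailment between RMLs implies weakening. -/
lemma entails_weaker {ms₁ : List (Agt × Bool)} {l₁ : Atom × Bool}
    {ms₂ : List (Agt × Bool)} {l₂ : Atom × Bool}
    (h : Entails (mkRML ms₁ l₁) (mkRML ms₂ l₂)) : l₁ = l₂ ∧ Weaker ms₁ ms₂ := by
  by_contra hc
  obtain ⟨M, hM, w, hs₁, hs₂⟩ := countermodel ms₁ l₁ ms₂ l₂ hc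
  exact hs₂ (h M hM w (by rintro ψ rfl; exact hs₁))


lemma entails_sat {φ ψ : Form Atom Agt} (h : Entails φ ψ) {M : Kripke Atom Agt}
    (hM : M.Serial) {w : M.W} (hs : Sat M w φ) : Sat M w ψ :=
  h M hM w (fun x hx => by rw [show x = φ from hx]; exact hs)

/-- Number of diamonds in a modality list. -/
def diaCount : List (Agt × Bool) → Nat
  | [] => 0
  | a :: ms => (bif a.2 then 0 else 1) + diaCount ms

lemma weaker_diaCount {ms' ms : List (Agt × Bool)} (h : Weaker ms' ms) :
    diaCount ms' ≤ diaCount ms ∧ (ms' ≠ ms → diaCount ms' < diaCount ms) := by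
  induction h with
  | nil => exact ⟨le_refl _, fun hc => absurd rfl hc⟩
  | @cons a b ms₁ ms₂ hab htail ih =>
      obtain ⟨hi, hxy⟩ := hab
      by_cases hab' : a = b
      · subst hab'
        refine ⟨?_, ?_⟩
        · simp only [diaCount]; omega
        · intro hne
          have hne' : ms₁ ≠ ms₂ := fun he => hne (by rw [he])
          have := ih.2 hne'
          simp only [diaCount]; omega
      · have hx : a.2 = true := by
          by_contra hx
          have hy : b.2 = false := by
            by_contra hy
            exact hx (hxy (by simpa using hy))
          exact hab' (Prod.ext hi (by rw [hy]; simpa using hx))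
        have hy : b.2 = false := by
          by_contra hy
          exact hab' (Prod.ext hi (by rw [hx]; simpa using hy))
        have h1 := ih.1
        refine ⟨?_, fun _ => ?_⟩ <;> simp only [diaCount, hx, hy, cond] <;> omega

/-- Every member of a set of RMLs is entailed by a maximal member. -/
lemma dominated {S : Set (Form Atom Agt)} (hS : ∀ φ ∈ S, IsRML φ) :
    ∀ φ ∈ S, ∃ ψ ∈ maxSet S, Entails ψ φ := by
  suffices h : ∀ (n : ℕ) (ms : List (Agt × Bool)) (l : Atom × Bool), diaCount ms = n →
      mkRML ms l ∈ S → ∃ ψ ∈ maxSet S, Entails ψ (mkRML ms l) by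
    intro φ hφ
    obtain ⟨ms, l, rfl⟩ := isRML_rep (hS φ hφ)
    exact h _ ms l rfl hφ
  intro n
  induction n using Nat.strong_induction_on with
  | _ n ih =>
    intro ms l hn hmem
    by_cases hmax : ∀ ψ ∈ S, Entails ψ (mkRML ms l) → Entails (mkRML ms l) ψ
    · exact ⟨mkRML ms l, ⟨hmem, hmax⟩, entails_refl _⟩
    · push_neg at hmax
      obtain ⟨ψ, hψS, hent, hnent⟩ := hmax
      obtain ⟨ms', l', rfl⟩ := isRML_rep (hS ψ hψS)
      obtain ⟨hl, hw⟩ := entails_weaker hent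
      have hne : ms' ≠ ms := by
        rintro rfl
        rw [hl] at hnent
        exact hnent (entails_refl _)
      have hlt : diaCount ms' < n := hn ▸ (weaker_diaCount hw).2 hne
      obtain ⟨χ, hχ, hentχ⟩ := ih (diaCount ms') hlt ms' l' rfl hψS
      exact ⟨χ, hχ, entails_trans hentχ hent⟩

end Aux

/-- KM update postulate U2 for PEKB belief update: if `P` is
consistent and `P ⊨ Q`, then `P ⋄ Q ≡ P`. -/
theorem km_update_u2 {Atom Agt : Type}
    (P Q : Set (Form Atom Agt)) (hP : IsPEKB P) (hQ : IsPEKB Q)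
    (hcons : Consistent P) (h : KBEntails P Q) :
    KBEquiv (updateKB P Q) P := by
  constructor
  · -- hard direction: P ⋄ Q ⊨ P
    intro φ hφP
    have hRML : IsRML φ := hP.2 φ hφP
    set S₁ : Set (Form Atom Agt) := upSet P \ downSet (negKB Q) with hS₁
    have hS₁R : ∀ χ ∈ S₁, IsRML χ := fun χ hχ => hχ.1.1
    have hφS₁ : φ ∈ S₁ := by
      constructor
      · exact ⟨hRML, φ, hφP, entails_refl φ⟩
      · rintro ⟨-, χ, hχ, hent⟩
        obtain ⟨ψ, hψQ, rfl⟩ := hχ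
        obtain ⟨M, hM, w, hw⟩ := hcons
        have h1 : Sat M w φ := hw φ hφP
        have h2 : Sat M w (nnfNeg ψ) := entails_sat hent hM h1
        have h3 : Sat M w ψ := h ψ hψQ M hM w hw
        exact (sat_nnfNeg (hQ.2 ψ hψQ) M w).mp h2 h3
    obtain ⟨ψ₁, hψ₁, hent₁⟩ := dominated hS₁R φ hφS₁
    set T : Set (Form Atom Agt) := eraseKB P (negKB Q) ∪ Q with hT
    have hTR : ∀ χ ∈ T, IsRML χ := by
      rintro χ (hχ | hχ)
      · exact hχ.1.1.1
      · exact hQ.2 χ hχ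
    have hψ₁T : ψ₁ ∈ T := Or.inl hψ₁
    obtain ⟨ψ₂, hψ₂, hent₂⟩ := dominated hTR ψ₁ hψ₁T
    intro M hM w hw
    have s2 : Sat M w ψ₂ := hw ψ₂ hψ₂
    exact entails_sat hent₁ hM (entails_sat hent₂ hM s2)
  · -- easy direction: P ⊨ P ⋄ Q
    intro φ hφ
    rcases hφ.1 with hφe | hφQ
    · obtain ⟨-, χ, hχP, hent⟩ := hφe.1.1
      intro M hM w hw
      exact entails_sat hent hM (hw χ hχP)
    · exact h φ hφQ
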